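/- The 8-dimensional 2-step nilpotent Lie algebra k₈ over K (K = ℝ or ℂ) with basis X_1,…,X_8 and nonzero brackets [X_1,X_2] = X_3, [X_4,X_6] = X_3, [X_7,X_8] = X_3, [X_1,X_4] = X_5, [X_2,X_8] = X_5, [X_6,X_7] = X_5 (and those obtained by skew-symmetry) admits no symplectic form: every closed alternating bilinear form on k₈ is degenerate (X_3 and X_5 lie in its kernel). -/
import Mathlib


/-- A symplectic form on a Lie algebra `g` over `K`: a `K`-bilinear form which is
alternating, nondegenerate and closed, i.e.
`θ ⁅X,Y⁆ Z + θ ⁅Y,Z⁆ X + θ ⁅Z,X⁆ Y = 0` for all `X Y Z`. -/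
def IsSymplecticForm (K : Type*) [RCLike K] (g : Type*) [LieRing g] [LieAlgebra K g]
    (θ : g → g → K) : Prop :=
  (∀ (a : K) (X Y Z : g), θ (a • X + Y) Z = a * θ X Z + θ Y Z) ∧
  (∀ (a : K) (X Y Z : g), θ X (a • Y + Z) = a * θ X Y + θ X Z) ∧
  (∀ X : g, θ X X = 0) ∧
  (∀ X : g, (∀ Y : g, θ X Y = 0) → X = 0) ∧
  (∀ X Y Z : g, θ ⁅X, Y⁆ Z + θ ⁅Y, Z⁆ X + θ ⁅Z, X⁆ Y = 0)
/-- The 8-dimensional 2-step nilpotent Lie algebra `k₈`, realized on `Fin 8 → K` with basis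
`X_i = e_{i-1}` and nonzero brackets `⁅X₁,X₂⁆ = X₃`, `⁅X₄,X₆⁆ = X₃`, `⁅X₇,X₈⁆ = X₃`,
`⁅X₁,X₄⁆ = X₅`, `⁅X₂,X₈⁆ = X₅`, `⁅X₆,X₇⁆ = X₅` (and those obtained by skew-symmetry). -/
abbrev K8 (K : Type*) [RCLike K] : Type _ := Fin 8 → K

namespace K8

variable {K : Type*} [RCLike K]

/-- The Lie bracket of `k₈`. -/
def brak (x y : K8 K) : K8 K := fun i =>
  if i = 2 then x 0 * y 1 - y 0 * x 1 + (x 3 * y 5 - y 3 * x 5) + (x 6 * y 7 - y 6 * x 7)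
  else if i = 4 then x 0 * y 3 - y 0 * x 3 + (x 1 * y 7 - y 1 * x 7) + (x 5 * y 6 - y 5 * x 6)
  else 0

instance (priority := 5000) : LieRing (K8 K) where
  bracket := brak
  add_lie x y z := by
    funext i
    show brak (x + y) z i = brak x z i + brak y z i
    fin_cases i <;> simp [brak] <;> ring
  lie_add x y z := by
    funext i
    show brak x (y + z) i = brak x y i + brak x z i
    fin_cases i <;> simp [brak] <;> ring
  lie_self x := by
    funext i
    show brak x x i = 0
    fin_cases i <;> simp [brak]
  leibniz_lie x y z := by
    funext i
    show brak x (brak y z) i = brak (brak x y) z i + brak y (brak x z) i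
    fin_cases i <;> simp [brak]

instance (priority := 5000) : LieAlgebra K (K8 K) where
  lie_smul t x y := by
    funext i
    show brak x (t • y) i = t * brak x y i
    fin_cases i <;> simp [brak] <;> ring

/-- The basis vector `X₃` of `k₈`. -/
def X3 : K8 K := fun j => if j = 2 then 1 else 0

/-- The basis vector `X₅` of `k₈`. -/
def X5 : K8 K := fun j => if j = 4 then 1 else 0

end K8

namespace K8

variable {K : Type*} [RCLike K]

/-- Basis vectors. -/
def E (i : Fin 8) : K8 K := fun j => if j = i then 1 else 0

lemma b01 : ⁅(E 0 : K8 K), E 1⁆ = (E 2 : K8 K) := by funext i; show brak _ _ i = _; fin_cases i <;> simp [brak, E]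
lemma b03 : ⁅(E 0 : K8 K), E 3⁆ = (E 4 : K8 K) := by funext i; show brak _ _ i = _; fin_cases i <;> simp [brak, E]
lemma b17 : ⁅(E 1 : K8 K), E 7⁆ = (E 4 : K8 K) := by funext i; show brak _ _ i = _; fin_cases i <;> simp [brak, E]
lemma b35 : ⁅(E 3 : K8 K), E 5⁆ = (E 2 : K8 K) := by funext i; show brak _ _ i = _; fin_cases i <;> simp [brak, E]
lemma b56 : ⁅(E 5 : K8 K), E 6⁆ = (E 4 : K8 K) := by funext i; show brak _ _ i = _; fin_cases i <;> simp [brak, E]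
lemma b67 : ⁅(E 6 : K8 K), E 7⁆ = (E 2 : K8 K) := by funext i; show brak _ _ i = _; fin_cases i <;> simp [brak, E]
lemma b30 : ⁅(E 3 : K8 K), E 0⁆ = (-(E 4) : K8 K) := by funext i; show brak _ _ i = _; fin_cases i <;> simp [brak, E]
lemma b71 : ⁅(E 7 : K8 K), E 1⁆ = (-(E 4) : K8 K) := by funext i; show brak _ _ i = _; fin_cases i <;> simp [brak, E]
lemma b13 : ⁅(E 1 : K8 K), E 3⁆ = (0 : K8 K) := by funext i; show brak _ _ i = _; fin_cases i <;> simp [brak, E]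
lemma b14 : ⁅(E 1 : K8 K), E 4⁆ = (0 : K8 K) := by funext i; show brak _ _ i = _; fin_cases i <;> simp [brak, E]
lemma b40 : ⁅(E 4 : K8 K), E 0⁆ = (0 : K8 K) := by funext i; show brak _ _ i = _; fin_cases i <;> simp [brak, E]
lemma b15 : ⁅(E 1 : K8 K), E 5⁆ = (0 : K8 K) := by funext i; show brak _ _ i = _; fin_cases i <;> simp [brak, E]
lemma b50 : ⁅(E 5 : K8 K), E 0⁆ = (0 : K8 K) := by funext i; show brak _ _ i = _; fin_cases i <;> simp [brak, E]
lemma b16 : ⁅(E 1 : K8 K), E 6⁆ = (0 : K8 K) := by funext i; show brak _ _ i = _; fin_cases i <;> simp [brak, E]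
lemma b60 : ⁅(E 6 : K8 K), E 0⁆ = (0 : K8 K) := by funext i; show brak _ _ i = _; fin_cases i <;> simp [brak, E]
lemma b70 : ⁅(E 7 : K8 K), E 0⁆ = (0 : K8 K) := by funext i; show brak _ _ i = _; fin_cases i <;> simp [brak, E]
lemma b32 : ⁅(E 3 : K8 K), E 2⁆ = (0 : K8 K) := by funext i; show brak _ _ i = _; fin_cases i <;> simp [brak, E]
lemma b20 : ⁅(E 2 : K8 K), E 0⁆ = (0 : K8 K) := by funext i; show brak _ _ i = _; fin_cases i <;> simp [brak, E]
lemma b51 : ⁅(E 5 : K8 K), E 1⁆ = (0 : K8 K) := by funext i; show brak _ _ i = _; fin_cases i <;> simp [brak, E]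
lemma b63 : ⁅(E 6 : K8 K), E 3⁆ = (0 : K8 K) := by funext i; show brak _ _ i = _; fin_cases i <;> simp [brak, E]
lemma b57 : ⁅(E 5 : K8 K), E 7⁆ = (0 : K8 K) := by funext i; show brak _ _ i = _; fin_cases i <;> simp [brak, E]
lemma b73 : ⁅(E 7 : K8 K), E 3⁆ = (0 : K8 K) := by funext i; show brak _ _ i = _; fin_cases i <;> simp [brak, E]
lemma b06 : ⁅(E 0 : K8 K), E 6⁆ = (0 : K8 K) := by funext i; show brak _ _ i = _; fin_cases i <;> simp [brak, E]
lemma b36 : ⁅(E 3 : K8 K), E 6⁆ = (0 : K8 K) := by funext i; show brak _ _ i = _; fin_cases i <;> simp [brak, E]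
lemma b75 : ⁅(E 7 : K8 K), E 5⁆ = (0 : K8 K) := by funext i; show brak _ _ i = _; fin_cases i <;> simp [brak, E]

end K8

/-- The Lie algebra `k₈` admits no symplectic form: indeed, every closed alternating
bilinear form `θ` on `k₈` is degenerate — `X₃` and `X₅` lie in its kernel. -/
theorem k8_not_symplectic (K : Type*) [RCLike K] :
    (¬ ∃ θ : K8 K → K8 K → K, IsSymplecticForm K (K8 K) θ) ∧
    ∀ θ : K8 K → K8 K → K,
      (∀ (a : K) (X Y Z : K8 K), θ (a • X + Y) Z = a * θ X Z + θ Y Z) →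
      (∀ (a : K) (X Y Z : K8 K), θ X (a • Y + Z) = a * θ X Y + θ X Z) →
      (∀ X : K8 K, θ X X = 0) →
      (∀ X Y Z : K8 K, θ ⁅X, Y⁆ Z + θ ⁅Y, Z⁆ X + θ ⁅Z, X⁆ Y = 0) →
      ∀ Y : K8 K, θ K8.X3 Y = 0 ∧ θ K8.X5 Y = 0 := by
  have key : ∀ θ : K8 K → K8 K → K,
      (∀ (a : K) (X Y Z : K8 K), θ (a • X + Y) Z = a * θ X Z + θ Y Z) →
      (∀ (a : K) (X Y Z : K8 K), θ X (a • Y + Z) = a * θ X Y + θ X Z) →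
      (∀ X : K8 K, θ X X = 0) →
      (∀ X Y Z : K8 K, θ ⁅X, Y⁆ Z + θ ⁅Y, Z⁆ X + θ ⁅Z, X⁆ Y = 0) →
      ∀ Y : K8 K, θ K8.X3 Y = 0 ∧ θ K8.X5 Y = 0 := by
    intro θ h1 h2 halt hcl
    have hz2 : ∀ X : K8 K, θ X 0 = 0 := by
      intro X
      have h := h2 1 X 0 0
      simp only [one_smul, add_zero, one_mul] at h
      linear_combination -h
    have hz1 : ∀ Z : K8 K, θ 0 Z = 0 := by
      intro Z
      have h := h1 1 0 0 Z
      simp only [one_smul, add_zero, one_mul] at h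
      linear_combination -h
    have hneg : ∀ X Z : K8 K, θ (-X) Z = - θ X Z := by
      intro X Z
      have h := h1 (-1) X 0 Z
      simp only [neg_smul, one_smul, add_zero, neg_one_mul] at h
      rw [h, hz1, add_zero]
    -- θ (E 2) (E j) = 0 for all j
    have c2 : θ (K8.E 2) (K8.E 2) = 0 := halt _
    have c4 : θ (K8.E 2) (K8.E 4) = 0 := by
      have h := hcl (K8.E 0) (K8.E 1) (K8.E 4)
      rw [K8.b01, K8.b14, K8.b40, hz1, hz1] at h
      linear_combination h
    have c5 : θ (K8.E 2) (K8.E 5) = 0 := by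
      have h := hcl (K8.E 0) (K8.E 1) (K8.E 5)
      rw [K8.b01, K8.b15, K8.b50, hz1, hz1] at h
      linear_combination h
    have c6 : θ (K8.E 2) (K8.E 6) = 0 := by
      have h := hcl (K8.E 0) (K8.E 1) (K8.E 6)
      rw [K8.b01, K8.b16, K8.b60, hz1, hz1] at h
      linear_combination h
    have c1 : θ (K8.E 2) (K8.E 1) = 0 := by
      have h := hcl (K8.E 3) (K8.E 5) (K8.E 1)
      rw [K8.b35, K8.b51, K8.b13, hz1, hz1] at h
      linear_combination h
    have c7 : θ (K8.E 2) (K8.E 7) = 0 := by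
      have h := hcl (K8.E 3) (K8.E 5) (K8.E 7)
      rw [K8.b35, K8.b57, K8.b73, hz1, hz1] at h
      linear_combination h
    have c0 : θ (K8.E 2) (K8.E 0) = 0 := by
      have h := hcl (K8.E 6) (K8.E 7) (K8.E 0)
      rw [K8.b67, K8.b70, K8.b06, hz1, hz1] at h
      linear_combination h
    have c3 : θ (K8.E 2) (K8.E 3) = 0 := by
      have h := hcl (K8.E 6) (K8.E 7) (K8.E 3)
      rw [K8.b67, K8.b73, K8.b36, hz1, hz1] at h
      linear_combination h
    -- θ (E 4) (E j) = 0 for all j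
    have d4 : θ (K8.E 4) (K8.E 4) = 0 := halt _
    have d2 : θ (K8.E 4) (K8.E 2) = 0 := by
      have h := hcl (K8.E 0) (K8.E 3) (K8.E 2)
      rw [K8.b03, K8.b32, K8.b20, hz1, hz1] at h
      linear_combination h
    have d0 : θ (K8.E 4) (K8.E 0) = 0 := by
      have h := hcl (K8.E 0) (K8.E 1) (K8.E 7)
      rw [K8.b01, K8.b17, K8.b70, hz1] at h
      linear_combination h - c7
    have d1 : θ (K8.E 4) (K8.E 1) = 0 := by
      have h := hcl (K8.E 0) (K8.E 1) (K8.E 3)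
      rw [K8.b01, K8.b13, K8.b30, hz1, hneg] at h
      linear_combination c3 - h
    have d3 : θ (K8.E 4) (K8.E 3) = 0 := by
      have h := hcl (K8.E 3) (K8.E 5) (K8.E 6)
      rw [K8.b35, K8.b56, K8.b63, hz1] at h
      linear_combination h - c6
    have d5 : θ (K8.E 4) (K8.E 5) = 0 := by
      have h := hcl (K8.E 3) (K8.E 5) (K8.E 0)
      rw [K8.b35, K8.b50, K8.b03, hz1] at h
      linear_combination h - c0
    have d6 : θ (K8.E 4) (K8.E 6) = 0 := by
      have h := hcl (K8.E 6) (K8.E 7) (K8.E 1)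
      rw [K8.b67, K8.b71, K8.b16, hz1, hneg] at h
      linear_combination c1 - h
    have d7 : θ (K8.E 4) (K8.E 7) = 0 := by
      have h := hcl (K8.E 6) (K8.E 7) (K8.E 5)
      rw [K8.b67, K8.b75, K8.b56, hz1] at h
      linear_combination h - c5
    have hb3 : ∀ i : Fin 8, θ (K8.E 2) (K8.E i) = 0 := by
      intro i; fin_cases i <;> assumption
    have hb5 : ∀ i : Fin 8, θ (K8.E 4) (K8.E i) = 0 := by
      intro i; fin_cases i <;> assumption
    -- extend to all Y by linearity
    have hext : ∀ X : K8 K, (∀ i, θ X (K8.E i) = 0) → ∀ Y : K8 K, θ X Y = 0 := by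
      intro X hX Y
      have hadd : ∀ a b : K8 K, θ X (a + b) = θ X a + θ X b := by
        intro a b
        have h := h2 1 X a b
        simpa using h
      have hsmul : ∀ (t : K) (a : K8 K), θ X (t • a) = t * θ X a := by
        intro t a
        have h := h2 t X a 0
        simpa [hz2] using h
      let F : K8 K →ₗ[K] K :=
        { toFun := θ X
          map_add' := hadd
          map_smul' := hsmul }
      have hY : Y = ∑ i : Fin 8, Y i • K8.E i := by
        funext j
        simp [K8.E, Finset.sum_apply, Pi.smul_apply, smul_eq_mul, mul_ite,
          Finset.sum_ite_eq]
      show F Y = 0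
      rw [hY, map_sum]
      refine Finset.sum_eq_zero fun i _ => ?_
      rw [map_smul]
      show Y i * θ X (K8.E i) = 0
      rw [hX i, mul_zero]
    intro Y
    exact ⟨hext (K8.E 2) hb3 Y, hext (K8.E 4) hb5 Y⟩
  refine ⟨?_, key⟩
  rintro ⟨θ, h1, h2, halt, hnd, hcl⟩
  have h3 : (K8.X3 : K8 K) = 0 := hnd _ fun Y => (key θ h1 h2 halt hcl Y).1
  have := congrFun h3 2
  simp [K8.X3] at this
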